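/- There exists a constant c > 0 such that the following holds. Let V be a finite type, G a simple graph on V, and d a natural number with 1 ≤ d and the maximum degree of G at most d. Let p : V → EuclideanSpace ℝ (Fin 3) be any injective map with p v 2 = 0 for every v, and let n denote the unit vector (0,0,1). For a unit vector u = (x, y, 0) in the base plane, write J u = (−y, x, 0) for its rotation by π/2 within the base plane. Then there exist assignments α, β : Sym2 V → ℝ with α e, β e ∈ [0, π/4] for every e, such that for every vertex v and every pair of distinct neighbors u, w of v, the vectors T(v,u) = cos(α_e) • û + sin(α_e) • (cos(β_e) • (J û) + sin(β_e) • n), where e = ⟦(v,u)⟧ and û = ‖p u − p v‖⁻¹ • (p u − p v), and the analogously defined T(v,w), form an angle of at least c/√d. -/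

import Mathlib

open Real InnerProductGeometry

/-- Rotation by `π / 2` within the base plane `z = 0`:
`J (x, y, 0) = (-y, x, 0)` (applied to any vector, using its first two
coordinates). -/
noncomputable def rotInBasePlane (u : EuclideanSpace ℝ (Fin 3)) :
    EuclideanSpace ℝ (Fin 3) :=
  (WithLp.equiv 2 (Fin 3 → ℝ)).symm ![-(u 1), u 0, 0]

/-- The unit tangent vector at `p v` of the slanted circular arc drawn
over the segment from `p v` to `p u`, in the plane through the two
endpoints making angle `β e` with the base plane, the arc making angle
`α e` with the segment at its endpoints (`e = s(v, u)`). -/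
noncomputable def slantedArcTangentVec {V : Type*}
    (p : V → EuclideanSpace ℝ (Fin 3)) (α β : Sym2 V → ℝ)
    (nvec : EuclideanSpace ℝ (Fin 3)) (v u : V) :
    EuclideanSpace ℝ (Fin 3) :=
  Real.cos (α s(v, u)) • (‖p u - p v‖⁻¹ • (p u - p v)) +
    Real.sin (α s(v, u)) •
      (Real.cos (β s(v, u)) • rotInBasePlane (‖p u - p v‖⁻¹ • (p u - p v)) +
        Real.sin (β s(v, u)) • nvec)

open Set Finset

/-!
For a unit horizontal direction `û`, the tangent `cos α • û + sin α • (cos β • J û + sin β • n)` has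
component `cos α` along `û` and `sin α * sin β` along `n`. On the grid
`α ∈ π/8 + (π/8m)·{0,…,m}`, `β ∈ (π/8m)·{0,…,m}` the first separates distinct `α`, the second
distinct `β` at equal `α`, so distinct grid points give tangents at distance `≳ 1/m`, whatever `û`.
Hence an edge already coloured at a common endpoint forbids at most one grid point for a new edge,
and a greedy colouring of the edges succeeds as soon as `(m + 1)² > 2 (d - 1)`, e.g. for
`m = ⌊√(2d)⌋ ≤ 2√d`. Finally the angle between unit vectors is at least their distance.
-/

lemma norm_sub_le_angle_of_norm_eq_one {F : Type*} [NormedAddCommGroup F] [InnerProductSpace ℝ F]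
    {x y : F} (hx : ‖x‖ = 1) (hy : ‖y‖ = 1) : ‖x - y‖ ≤ angle x y := by
  have hcos := norm_sub_sq_eq_norm_sq_add_norm_sq_sub_two_mul_norm_mul_norm_mul_cos_angle x y
  rw [hx, hy] at hcos
  nlinarith [one_sub_sq_div_two_le_cos (x := angle x y), angle_nonneg x y, norm_nonneg (x - y)]

lemma sin_mul_abs_sub_le_abs_cos_sub {θ x y : ℝ} (hθ : -(π / 2) ≤ θ) (hx : x ∈ Icc θ (π / 2))
    (hy : y ∈ Icc θ (π / 2)) : sin θ * |x - y| ≤ |cos x - cos y| := by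
  wlog hxy : x ≤ y generalizing x y
  · rw [abs_sub_comm, abs_sub_comm (cos x)]
    exact this hy hx (le_of_not_ge hxy)
  have hderiv : ∀ t ∈ interior (Icc θ (π / 2)), sin θ ≤ deriv (fun t => -cos t) t := by
    intro t ht
    rw [interior_Icc] at ht
    simpa using sin_le_sin_of_le_of_le_pi_div_two hθ ht.2.le ht.1.le
  have hmvt := (convex_Icc θ (π / 2)).mul_sub_le_image_sub_of_le_deriv
    continuous_cos.neg.continuousOn differentiable_cos.neg.differentiableOn hderiv x hx y hy hxy
  rw [abs_sub_comm x y, abs_of_nonneg (sub_nonneg.2 hxy)]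
  exact hmvt.trans (by simpa [neg_add_eq_sub] using le_abs_self (cos x - cos y))

lemma cos_mul_abs_sub_le_abs_sin_sub {φ x y : ℝ} (hφ : φ ≤ π) (hx : x ∈ Icc 0 φ)
    (hy : y ∈ Icc 0 φ) : cos φ * |x - y| ≤ |sin x - sin y| := by
  have h := sin_mul_abs_sub_le_abs_cos_sub (θ := π / 2 - φ) (x := π / 2 - x) (y := π / 2 - y)
    (by linarith) ⟨by linarith [hx.2], by linarith [hx.1]⟩ ⟨by linarith [hy.2], by linarith [hy.1]⟩
  rwa [sin_pi_div_two_sub, cos_pi_div_two_sub, cos_pi_div_two_sub, sub_sub_sub_cancel_left,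
    abs_sub_comm y] at h

-- `slantedArcTangentVec p α β (EuclideanSpace.single 2 1) v u` unfolds to
-- `arcTangent (‖p u - p v‖⁻¹ • (p u - p v)) (α s(v, u)) (β s(v, u))`.
noncomputable def arcTangent (w : EuclideanSpace ℝ (Fin 3)) (a b : ℝ) : EuclideanSpace ℝ (Fin 3) :=
  cos a • w + sin a • (cos b • rotInBasePlane w + sin b • EuclideanSpace.single 2 1)

section ArcTangent

variable {w : EuclideanSpace ℝ (Fin 3)}

lemma norm_arcTangent (hw : ‖w‖ = 1) (hw2 : w 2 = 0) (a b : ℝ) : ‖arcTangent w a b‖ = 1 := by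
  have hw' : w 0 ^ 2 + w 1 ^ 2 = 1 := by
    simpa [Fin.sum_univ_three, hw, hw2] using (EuclideanSpace.norm_sq_eq w).symm
  have hT : ‖arcTangent w a b‖ ^ 2 = (cos a * w 0 - sin a * cos b * w 1) ^ 2
      + (cos a * w 1 + sin a * cos b * w 0) ^ 2 + (sin a * sin b) ^ 2 := by
    simp [EuclideanSpace.norm_sq_eq, Fin.sum_univ_three, arcTangent, rotInBasePlane, hw2]; ring
  refine (pow_eq_one_iff_of_nonneg (norm_nonneg _) two_ne_zero).1 ?_
  linear_combination hT + (cos a ^ 2 + (sin a * cos b) ^ 2) * hw' + sin a ^ 2 * sin_sq_add_cos_sq b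
    + sin_sq_add_cos_sq a

lemma inner_arcTangent_self (hw : ‖w‖ = 1) (hw2 : w 2 = 0) (a b : ℝ) :
    inner ℝ (arcTangent w a b) w = cos a := by
  have hrot : inner ℝ (rotInBasePlane w) w = 0 := by
    simp [rotInBasePlane, PiLp.inner_apply, Fin.sum_univ_three]; ring
  have hn : inner ℝ (EuclideanSpace.single (2 : Fin 3) (1 : ℝ)) w = 0 := by
    simp [EuclideanSpace.inner_single_left, hw2]
  simp [arcTangent, inner_add_left, inner_smul_left, hrot, hn, hw]

lemma inner_arcTangent_single (hw2 : w 2 = 0) (a b : ℝ) :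
    inner ℝ (arcTangent w a b) (EuclideanSpace.single 2 1) = sin a * sin b := by
  simp [arcTangent, EuclideanSpace.inner_single_right, rotInBasePlane, hw2]

lemma sin_mul_abs_sub_le_dist_arcTangent (hw : ‖w‖ = 1) (hw2 : w 2 = 0)
    {θ a a' : ℝ} (hθ : -(π / 2) ≤ θ) (ha : a ∈ Icc θ (π / 2))
    (ha' : a' ∈ Icc θ (π / 2)) (b b' : ℝ) :
    sin θ * |a - a'| ≤ dist (arcTangent w a b) (arcTangent w a' b') :=
  calc sin θ * |a - a'| ≤ |cos a - cos a'| := sin_mul_abs_sub_le_abs_cos_sub hθ ha ha'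
    _ = |inner ℝ (arcTangent w a b - arcTangent w a' b') w| := by
      rw [inner_sub_left, inner_arcTangent_self hw hw2, inner_arcTangent_self hw hw2]
    _ ≤ dist (arcTangent w a b) (arcTangent w a' b') := by
      simpa [hw, dist_eq_norm] using
        abs_real_inner_le_norm (arcTangent w a b - arcTangent w a' b') w

lemma sin_mul_cos_mul_abs_sub_le_dist_arcTangent (hw2 : w 2 = 0)
    {a φ b b' : ℝ} (ha : 0 ≤ sin a) (hφ : φ ≤ π) (hb : b ∈ Icc 0 φ) (hb' : b' ∈ Icc 0 φ) :
    sin a * cos φ * |b - b'| ≤ dist (arcTangent w a b) (arcTangent w a b') :=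
  calc sin a * cos φ * |b - b'| ≤ sin a * |sin b - sin b'| := by
        rw [mul_assoc]
        exact mul_le_mul_of_nonneg_left (cos_mul_abs_sub_le_abs_sin_sub hφ hb hb') ha
    _ = |inner ℝ (arcTangent w a b - arcTangent w a b') (EuclideanSpace.single 2 1)| := by
      rw [inner_sub_left, inner_arcTangent_single hw2, inner_arcTangent_single hw2, ← mul_sub,
        abs_mul, abs_of_nonneg ha]
    _ ≤ dist (arcTangent w a b) (arcTangent w a b') := by
      simpa [dist_eq_norm] using abs_real_inner_le_norm (arcTangent w a b - arcTangent w a b')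
        (EuclideanSpace.single (2 : Fin 3) (1 : ℝ))

end ArcTangent

noncomputable def gridAngle (m i : ℕ) : ℝ := π / 8 * (i / m)

lemma gridAngle_mem_Icc {m i : ℕ} (h : i ≤ m) : gridAngle m i ∈ Icc 0 (π / 8) := by
  have : (i / m : ℝ) ≤ 1 := div_le_one_of_le₀ (by exact_mod_cast h) (Nat.cast_nonneg m)
  exact ⟨by unfold gridAngle; positivity, mul_le_of_le_one_right (by positivity) this⟩

lemma le_abs_gridAngle_sub {m i j : ℕ} (h : i ≠ j) :
    π / (8 * m) ≤ |gridAngle m i - gridAngle m j| := by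
  have hij : (1 : ℝ) ≤ |(i : ℝ) - j| := by
    have := Int.one_le_abs (sub_ne_zero.2 (Int.natCast_inj.not.2 h))
    exact_mod_cast this
  calc π / (8 * m) = π / 8 * (1 / m) := by ring
    _ ≤ π / 8 * (|(i : ℝ) - j| / m) := by gcongr
    _ = |gridAngle m i - gridAngle m j| := by
      rw [gridAngle, gridAngle, ← mul_sub, ← sub_div, abs_mul,
        abs_of_pos (by positivity : 0 < π / 8), abs_div, Nat.abs_cast]

noncomputable def gridArcTangent (w : EuclideanSpace ℝ (Fin 3)) (m : ℕ)
    (c : Fin (m + 1) × Fin (m + 1)) :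
    EuclideanSpace ℝ (Fin 3) :=
  arcTangent w (π / 8 + gridAngle m c.1) (gridAngle m c.2)

lemma dist_gridArcTangent {w : EuclideanSpace ℝ (Fin 3)} (hw : ‖w‖ = 1) (hw2 : w 2 = 0) {m : ℕ}
    {c c' : Fin (m + 1) × Fin (m + 1)} (h : c ≠ c') :
    sin (π / 8) * cos (π / 8) * (π / (8 * m)) ≤
      dist (gridArcTangent w m c) (gridArcTangent w m c') := by
  obtain ⟨⟨i, hi⟩, ⟨j, hj⟩⟩ := c
  obtain ⟨⟨i', hi'⟩, ⟨j', hj'⟩⟩ := c'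
  have hα : ∀ k ≤ m, π / 8 + gridAngle m k ∈ Icc (π / 8) (π / 2) := fun k hk =>
    ⟨by linarith [(gridAngle_mem_Icc hk).1], by linarith [(gridAngle_mem_Icc hk).2, pi_pos]⟩
  have hsin : 0 < sin (π / 8) := sin_pos_of_pos_of_lt_pi (by positivity) (by linarith [pi_pos])
  have hcos : 0 < cos (π / 8) := cos_pos_of_mem_Ioo ⟨by linarith [pi_pos], by linarith [pi_pos]⟩
  by_cases hii : i = i'
  · subst hii
    have hjj : j ≠ j' := fun hjj => h (by simp [hjj])
    obtain ⟨hα₁, hα₂⟩ := hα i (by omega)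
    have hsinα : sin (π / 8) ≤ sin (π / 8 + gridAngle m i) :=
      sin_le_sin_of_le_of_le_pi_div_two (by linarith [pi_pos]) hα₂ hα₁
    calc sin (π / 8) * cos (π / 8) * (π / (8 * m))
        ≤ sin (π / 8 + gridAngle m i) * cos (π / 8) * |gridAngle m j - gridAngle m j'| := by
          gcongr
          · exact mul_nonneg (hsin.le.trans hsinα) hcos.le
          · exact le_abs_gridAngle_sub hjj
      _ ≤ _ := sin_mul_cos_mul_abs_sub_le_dist_arcTangent hw2 (hsin.le.trans hsinα)
          (by linarith [pi_pos]) (gridAngle_mem_Icc (by omega)) (gridAngle_mem_Icc (by omega))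
  · calc sin (π / 8) * cos (π / 8) * (π / (8 * m)) ≤ sin (π / 8) * (π / (8 * m)) := by
          gcongr; exact mul_le_of_le_one_right hsin.le (cos_le_one _)
      _ ≤ sin (π / 8) * |(π / 8 + gridAngle m i) - (π / 8 + gridAngle m i')| := by
          rw [add_sub_add_left_eq_sub]; gcongr; exact le_abs_gridAngle_sub hii
      _ ≤ _ := sin_mul_abs_sub_le_dist_arcTangent hw hw2 (by linarith [pi_pos]) (hα i (by omega))
          (hα i' (by omega)) _ _

section GreedyColoring

variable {V κ E : Type*} [Fintype κ] [PseudoMetricSpace E]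

lemma card_filter_dist_lt_half_le_one {ε : ℝ} {g : κ → E}
    (hg : Pairwise fun c c' => ε ≤ dist (g c) (g c')) (q : E) :
    #{c | dist (g c) q < ε / 2} ≤ 1 :=
  card_le_one.2 fun c hc c' hc' => by
    by_contra hne
    have := dist_triangle_right (g c) (g c') q
    rw [mem_filter_univ] at hc hc'
    linarith [hg hne]

lemma exists_forall_half_le_dist {ι : Type*} {ε : ℝ} (I : Finset ι) (hI : #I < Fintype.card κ)
    (g : ι → κ → E) (hg : ∀ i ∈ I, Pairwise fun c c' => ε ≤ dist (g i c) (g i c')) (q : ι → E) :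
    ∃ c, ∀ i ∈ I, ε / 2 ≤ dist (g i c) (q i) := by
  classical
  have hbad : #(I.biUnion fun i => {c | dist (g i c) (q i) < ε / 2}) < #(univ : Finset κ) :=
    calc _ ≤ ∑ i ∈ I, #{c | dist (g i c) (q i) < ε / 2} := card_biUnion_le
      _ ≤ ∑ _i ∈ I, 1 := sum_le_sum fun i hi => card_filter_dist_lt_half_le_one (hg i hi) (q i)
      _ < _ := by simpa using hI
  obtain ⟨c, -, hc⟩ := exists_mem_notMem_of_card_lt_card hbad
  refine ⟨c, fun i hi => not_lt.1 fun hlt => hc (mem_biUnion.2 ⟨i, hi, by simpa using hlt⟩)⟩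

variable (G : SimpleGraph V) (t : V → V → κ → E)

def SeparatesTangentsOn (r : ℝ) (s : Finset (Sym2 V)) (f : Sym2 V → κ) : Prop :=
  ∀ v u w, G.Adj v u → G.Adj v w → u ≠ w → s(v, u) ∈ s → s(v, w) ∈ s →
    r ≤ dist (t v u (f s(v, u))) (t v w (f s(v, w)))

variable [Fintype V] [DecidableEq V] [DecidableRel G.Adj] {ε : ℝ} {d : ℕ}

lemma exists_separatesTangentsOn_insert (hG : G.maxDegree ≤ d)
    (hκ : 2 * (d - 1) < Fintype.card κ)
    (ht : ∀ v u, G.Adj v u → Pairwise fun c c' => ε ≤ dist (t v u c) (t v u c'))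
    {s : Finset (Sym2 V)} {f : Sym2 V → κ} (hf : SeparatesTangentsOn G t (ε / 2) s f) {a b : V}
    (hab : G.Adj a b) (he : s(a, b) ∉ s) :
    ∃ c, SeparatesTangentsOn G t (ε / 2) (insert s(a, b) s) (Function.update f s(a, b) c) := by
  set D : Finset (V × V) := {(a, b), (b, a)}
  have hD : ∀ vu ∈ D, G.Adj vu.1 vu.2 := by simp [D, hab, hab.symm]
  set I := D.sigma fun vu => (G.neighborFinset vu.1).erase vu.2
  have hI : #I < Fintype.card κ :=
    calc #I = ∑ vu ∈ D, #((G.neighborFinset vu.1).erase vu.2) := card_sigma _ _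
      _ ≤ #D • (d - 1) := sum_le_card_nsmul _ _ _ fun vu hvu => by
          rw [card_erase_of_mem (by simpa using hD vu hvu), G.card_neighborFinset_eq_degree]
          exact Nat.sub_le_sub_right ((G.degree_le_maxDegree _).trans hG) 1
      _ ≤ 2 * (d - 1) := Nat.mul_le_mul_right _ card_le_two
      _ < _ := hκ
  obtain ⟨c, hc⟩ := exists_forall_half_le_dist I hI (fun i => t i.1.1 i.1.2)
    (fun i hi => ht _ _ (hD _ (mem_sigma.1 hi).1)) (fun i => t i.1.1 i.2 (f s(i.1.1, i.2)))
  refine ⟨c, ?_⟩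
  have hnew : ∀ v u w, G.Adj v w → u ≠ w → s(v, u) = s(a, b) →
      ε / 2 ≤ dist (t v u c) (t v w (Function.update f s(a, b) c s(v, w))) := by
    intro v u w hvw huw hvu
    rw [Function.update_of_ne (hvu ▸ fun h => huw (Sym2.congr_right.1 h.symm))]
    refine hc ⟨(v, u), w⟩ (mem_sigma.2 ⟨?_, by simp [huw.symm, hvw]⟩)
    rcases Sym2.eq_iff.1 hvu with ⟨rfl, rfl⟩ | ⟨rfl, rfl⟩ <;> simp [D]
  intro v u w hvu hvw huw hu hw
  rcases mem_insert.1 hu with hu | hu <;> rcases mem_insert.1 hw with hw | hw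
  · exact absurd (Sym2.congr_right.1 (hu.trans hw.symm)) huw
  · simpa only [hu, Function.update_self] using hnew v u w hvw huw hu
  · simpa only [hw, Function.update_self, dist_comm] using hnew v w u hvu huw.symm hw
  · rw [Function.update_of_ne (ne_of_mem_of_not_mem hu he),
      Function.update_of_ne (ne_of_mem_of_not_mem hw he)]
    exact hf v u w hvu hvw huw hu hw

theorem exists_forall_adj_half_le_dist (hG : G.maxDegree ≤ d)
    (hκ : 2 * (d - 1) < Fintype.card κ)
    (ht : ∀ v u, G.Adj v u → Pairwise fun c c' => ε ≤ dist (t v u c) (t v u c')) :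
    ∃ f : Sym2 V → κ, ∀ v u w, G.Adj v u → G.Adj v w → u ≠ w →
      ε / 2 ≤ dist (t v u (f s(v, u))) (t v w (f s(v, w))) := by
  obtain ⟨f, hf⟩ : ∃ f, SeparatesTangentsOn G t (ε / 2) G.edgeFinset f := by
    refine G.edgeFinset.induction_on' ?_ fun e s he _ hes ⟨f, hf⟩ => ?_
    · have : Nonempty κ := Fintype.card_pos_iff.1 (by omega)
      exact ⟨fun _ => Classical.arbitrary κ, by simp [SeparatesTangentsOn]⟩
    · induction e using Sym2.ind with
      | h a b =>
        obtain ⟨c, hc⟩ := exists_separatesTangentsOn_insert G t hG hκ ht hf (by simpa using he) hes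
        exact ⟨_, hc⟩
  exact ⟨f, fun v u w hvu hvw huw => hf v u w hvu hvw huw (by simpa) (by simpa)⟩

end GreedyColoring

lemma nat_sqrt_two_mul_le_two_mul_sqrt (n : ℕ) : (Nat.sqrt (2 * n) : ℝ) ≤ 2 * √n := by
  have : (Nat.sqrt (2 * n) : ℝ) ^ 2 ≤ 2 * n := by exact_mod_cast Nat.sqrt_le' (2 * n)
  nlinarith [sq_sqrt (Nat.cast_nonneg (α := ℝ) n), sqrt_nonneg (n : ℝ)]

/-- Theorem 4 of the paper: there is a constant `c > 0` such that for any
graph `G` of maximum degree at most `d ≥ 1` and any injective placement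
of its vertices in the base plane `z = 0`, one can choose angles
`α e, β e ∈ [0, π/4]` so that the resulting slanted 3D arc diagram has
angular resolution at least `c / √d`. -/
theorem exists_slanted_arc_diagram_angular_resolution :
    ∃ c : ℝ, 0 < c ∧
      ∀ (V : Type) [Fintype V] (G : SimpleGraph V) [DecidableRel G.Adj] (d : ℕ),
        1 ≤ d → G.maxDegree ≤ d →
        ∀ p : V → EuclideanSpace ℝ (Fin 3), Function.Injective p →
          (∀ v, p v 2 = 0) →
          ∃ α β : Sym2 V → ℝ,
            (∀ e, α e ∈ Set.Icc 0 (π / 4)) ∧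
            (∀ e, β e ∈ Set.Icc 0 (π / 4)) ∧
            ∀ v u w : V, G.Adj v u → G.Adj v w → u ≠ w →
              c / Real.sqrt d ≤ angle
                (slantedArcTangentVec p α β (EuclideanSpace.single 2 1) v u)
                (slantedArcTangentVec p α β (EuclideanSpace.single 2 1) v w) := by
  have hsin : 0 < sin (π / 8) := sin_pos_of_pos_of_lt_pi (by positivity) (by linarith [pi_pos])
  have hcos : 0 < cos (π / 8) := cos_pos_of_mem_Ioo ⟨by linarith [pi_pos], by linarith [pi_pos]⟩
  refine ⟨sin (π / 8) * cos (π / 8) * π / 32, by positivity, ?_⟩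
  intro V _ G _ d hd hG p hp hp0
  classical
  set m := Nat.sqrt (2 * d)
  have hm : 0 < m := Nat.sqrt_pos.2 (by omega)
  have hcard : 2 * (d - 1) < Fintype.card (Fin (m + 1) × Fin (m + 1)) := by
    simpa using (Nat.lt_succ_sqrt (2 * d)).trans_le' (by omega)
  have hdir : ∀ v u, G.Adj v u →
      ‖‖p u - p v‖⁻¹ • (p u - p v)‖ = 1 ∧ (‖p u - p v‖⁻¹ • (p u - p v)) 2 = 0 := fun v u hvu =>
    ⟨norm_smul_inv_norm (sub_ne_zero.2 (hp.ne hvu.ne')), by simp [hp0]⟩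
  obtain ⟨f, hf⟩ := exists_forall_adj_half_le_dist G
    (fun v u => gridArcTangent (‖p u - p v‖⁻¹ • (p u - p v)) m) hG hcard
    fun v u hvu c c' hcc' => dist_gridArcTangent (hdir v u hvu).1 (hdir v u hvu).2 hcc'
  refine ⟨fun e => π / 8 + gridAngle m (f e).1, fun e => gridAngle m (f e).2,
    fun e => ?_, fun e => ?_, fun v u w hvu hvw huw => ?_⟩
  · have := gridAngle_mem_Icc (Nat.le_of_lt_succ (f e).1.2)
    exact ⟨by linarith [this.1, pi_pos], by linarith [this.2]⟩
  · have := gridAngle_mem_Icc (Nat.le_of_lt_succ (f e).2.2)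
    exact ⟨this.1, by linarith [this.2, pi_pos]⟩
  calc sin (π / 8) * cos (π / 8) * π / 32 / √d
        = sin (π / 8) * cos (π / 8) * π / (16 * (2 * √d)) := by ring
    _ ≤ sin (π / 8) * cos (π / 8) * π / (16 * m) := by
        gcongr; exact nat_sqrt_two_mul_le_two_mul_sqrt d
    _ = sin (π / 8) * cos (π / 8) * (π / (8 * m)) / 2 := by ring
    _ ≤ _ := hf v u w hvu hvw huw
    _ ≤ _ := (dist_eq_norm _ _).trans_le (norm_sub_le_angle_of_norm_eq_one
        (norm_arcTangent (hdir v u hvu).1 (hdir v u hvu).2 _ _)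
        (norm_arcTangent (hdir v w hvw).1 (hdir v w hvw).2 _ _))
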